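/- Let S ≤ P_n be a stabilizer group of rank r, k = n − r, and let p be a Hermitian Pauli with p ∈ C(S) and ±p ∉ S. Suppose N(S)/S = ⟨ī, x̄_1, z̄_1, …, x̄_k, z̄_k⟩ is a presentation with x̄_1 = p̄ in which ī ↦ i, x̄_j ↦ X_j, z̄_j ↦ Z_j extends to an isomorphism N(S)/S ≅ P_k. Set S' = ⟨p⟩·S. Then each of x_2, z_2, …, x_k, z_k lies in N(S'), their cosets modulo S' together with the coset of i·I are independent generators of N(S')/S', and the assignment (coset of i·I) ↦ i, (coset of x_j) ↦ X_{j−1}, (coset of z_j) ↦ Z_{j−1} extends to an isomorphism N(S')/S' ≅ P_{k−1}. -/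

import Mathlib

open Matrix

noncomputable section

/-- The space of operators on `ι`-many qubits: matrices whose rows and columns are
indexed by bit strings `ι → Fin 2`, with complex entries. -/
abbrev PMat (ι : Type) [Fintype ι] [DecidableEq ι] : Type :=
  Matrix (ι → Fin 2) (ι → Fin 2) ℂ

variable (ι : Type) [Fintype ι] [DecidableEq ι]

lemma fin2_add_one_add_one : ∀ a : Fin 2, a + 1 + 1 = a := by decide

/-- The matrix of the operator `X k`, which flips the `k`-th bit of a basis state. -/
def XMat (k : ι) : PMat ι :=
  Matrix.of fun x y => if y = Function.update x k (x k + 1) then (1 : ℂ) else 0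

/-- The matrix of the operator `Z k`, which multiplies the basis state `x` by `(-1) ^ (x k)`. -/
def ZMat (k : ι) : PMat ι :=
  Matrix.diagonal fun x => (-1 : ℂ) ^ (x k : ℕ)

lemma XMat_mul_self (k : ι) : XMat ι k * XMat ι k = 1 := by
  have hinv : ∀ x : ι → Fin 2,
      Function.update (Function.update x k (x k + 1)) k
        (Function.update x k (x k + 1) k + 1) = x := by
    intro x
    ext j
    rcases eq_or_ne j k with rfl | h
    · simp [fin2_add_one_add_one]
    · simp [Function.update_of_ne h]
  ext x z
  rw [Matrix.mul_apply]
  simp only [XMat, Matrix.of_apply, ite_mul, one_mul, zero_mul]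
  rw [Finset.sum_ite_eq' Finset.univ (Function.update x k (x k + 1))
    (fun y => if z = Function.update y k (y k + 1) then (1 : ℂ) else 0)]
  simp [Matrix.one_apply, fin2_add_one_add_one, Function.update_eq_self, eq_comm]

lemma ZMat_mul_self (k : ι) : ZMat ι k * ZMat ι k = 1 := by
  have h : (fun i : ι → Fin 2 => (-1 : ℂ) ^ (i k : ℕ) * (-1) ^ (i k : ℕ)) = fun _ => 1 := by
    funext x
    rw [← pow_add, ← two_mul, pow_mul, neg_one_sq, one_pow]
  rw [ZMat, Matrix.diagonal_mul_diagonal, h, Matrix.diagonal_one]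

lemma iMat_mul : (Complex.I • (1 : PMat ι)) * ((-Complex.I) • (1 : PMat ι)) = 1 := by
  rw [smul_mul_smul_comm]
  simp [Complex.I_mul_I]

lemma iMat_mul' : ((-Complex.I) • (1 : PMat ι)) * (Complex.I • (1 : PMat ι)) = 1 := by
  rw [smul_mul_smul_comm]
  simp [Complex.I_mul_I]

/-- The scalar `i·I`, as a unit. -/
def iU : (PMat ι)ˣ := ⟨Complex.I • 1, (-Complex.I) • 1, iMat_mul ι, iMat_mul' ι⟩

/-- The operator `X k`, as a unit. -/
def XU (k : ι) : (PMat ι)ˣ := ⟨XMat ι k, XMat ι k, XMat_mul_self ι k, XMat_mul_self ι k⟩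

/-- The operator `Z k`, as a unit. -/
def ZU (k : ι) : (PMat ι)ˣ := ⟨ZMat ι k, ZMat ι k, ZMat_mul_self ι k, ZMat_mul_self ι k⟩

/-- The Pauli group on the qubits indexed by `ι`: the subgroup of invertible operators
generated by `i·I` and the `X k` and `Z k`. -/
def PauliGroup : Subgroup (PMat ι)ˣ :=
  Subgroup.closure ({iU ι} ∪ Set.range (XU ι) ∪ Set.range (ZU ι))

/-- The phase-free "almost Pauli group" `⟨X 1, Z 1, …, X n, Z n⟩`. -/
def PauliGroupNP : Subgroup (PMat ι)ˣ :=
  Subgroup.closure (Set.range (XU ι) ∪ Set.range (ZU ι))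

lemma iU_mem : iU ι ∈ PauliGroup ι :=
  Subgroup.subset_closure (Or.inl (Or.inl rfl))

lemma XU_mem (k : ι) : XU ι k ∈ PauliGroup ι :=
  Subgroup.subset_closure (Or.inl (Or.inr ⟨k, rfl⟩))

lemma ZU_mem (k : ι) : ZU ι k ∈ PauliGroup ι :=
  Subgroup.subset_closure (Or.inr ⟨k, rfl⟩)

lemma XU_memNP (k : ι) : XU ι k ∈ PauliGroupNP ι :=
  Subgroup.subset_closure (Or.inl ⟨k, rfl⟩)

lemma ZU_memNP (k : ι) : ZU ι k ∈ PauliGroupNP ι :=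
  Subgroup.subset_closure (Or.inr ⟨k, rfl⟩)

/-- A stabilizer group: a subgroup of the Pauli group not containing `-I`. -/
structure IsStabilizer (S : Subgroup (PMat ι)ˣ) : Prop where
  le : S ≤ PauliGroup ι
  neg_one_notMem : (-1 : (PMat ι)ˣ) ∉ S

/-- A subgroup has rank `r` if it admits a generating set of size `r` and no smaller one. -/
def HasRank {G : Type*} [Group G] (S : Subgroup G) (r : ℕ) : Prop :=
  (∃ T : Finset G, Subgroup.closure (T : Set G) = S ∧ T.card = r) ∧
    ∀ T : Finset G, Subgroup.closure (T : Set G) = S → r ≤ T.card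

/-- The normalizer `N(S) = {p ∈ P_n : p S p⁻¹ = S}` of `S` in the Pauli group. -/
def NormIn (S : Subgroup (PMat ι)ˣ) : Subgroup (PMat ι)ˣ :=
  Subgroup.normalizer (S : Set (PMat ι)ˣ) ⊓ PauliGroup ι

/-- The centralizer `C(S) = {p ∈ P_n : ∀ s ∈ S, p s = s p}` of `S` in the Pauli group. -/
def CentIn (S : Subgroup (PMat ι)ˣ) : Subgroup (PMat ι)ˣ :=
  Subgroup.centralizer (S : Set (PMat ι)ˣ) ⊓ PauliGroup ι

instance normIn_normal (S : Subgroup (PMat ι)ˣ) : (S.subgroupOf (NormIn ι S)).Normal := by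
  constructor
  intro x hx g
  rw [Subgroup.mem_subgroupOf] at hx ⊢
  have hg : (g : (PMat ι)ˣ) ∈ Subgroup.normalizer (S : Set (PMat ι)ˣ) := (Subgroup.mem_inf.mp g.2).1
  have h := (Subgroup.mem_normalizer_iff.mp hg (x : (PMat ι)ˣ)).mp hx
  simpa using h

/-- The logical Pauli group `N(S)/S`. -/
abbrev LogicalGroup (S : Subgroup (PMat ι)ˣ) :=
  ↥(NormIn ι S) ⧸ S.subgroupOf (NormIn ι S)

/-- A Pauli is Hermitian if its matrix equals its conjugate transpose. -/
def IsHermitianPauli (p : (PMat ι)ˣ) : Prop := (p : PMat ι).IsHermitian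

/-- The weight of a Pauli: the number of qubits on which it acts non-trivially,
i.e. on which it fails to commute with `X k` or with `Z k`. -/
def weight (p : (PMat ι)ˣ) : ℕ :=
  Nat.card {k : ι // ¬(Commute p (XU ι k) ∧ Commute p (ZU ι k))}

/-- The effect on a stabilizer group of measuring the Hermitian Pauli `p`,
post-selecting the outcome `+1`: `S ↦ ⟨p⟩·(S ∩ C(p))`. -/
def measUpdate (p : (PMat ι)ˣ) (S : Subgroup (PMat ι)ˣ) : Subgroup (PMat ι)ˣ :=
  Subgroup.closure {p} ⊔ (S ⊓ Subgroup.centralizer {p})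

lemma iU_central (A : (PMat ι)ˣ) : iU ι * A = A * iU ι := by
  apply Units.ext
  show (Complex.I • (1 : PMat ι)) * (A : PMat ι) = (A : PMat ι) * (Complex.I • 1)
  rw [smul_mul_assoc, one_mul, mul_smul_comm, mul_one]

lemma iU_mem_normIn (S : Subgroup (PMat ι)ˣ) : iU ι ∈ NormIn ι S := by
  refine Subgroup.mem_inf.mpr ⟨?_, iU_mem ι⟩
  rw [Subgroup.mem_normalizer_iff]
  intro h
  have : iU ι * h * (iU ι)⁻¹ = h := by
    rw [iU_central ι h, mul_assoc, mul_inv_cancel, mul_one]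
  rw [this]

set_option linter.unusedSectionVars false
section Stage1
variable (ι : Type) [Fintype ι] [DecidableEq ι]

/-- bit flip -/
def flipAt (k : ι) (x : ι → Fin 2) : ι → Fin 2 := Function.update x k (x k + 1)

lemma flipAt_flipAt (k : ι) (x : ι → Fin 2) : flipAt ι k (flipAt ι k x) = x := by
  ext j
  rcases eq_or_ne j k with rfl | h
  · simp [flipAt, fin2_add_one_add_one]
  · simp [flipAt, Function.update_of_ne h]

lemma flipAt_eq_iff (k : ι) (x y : ι → Fin 2) : y = flipAt ι k x ↔ flipAt ι k y = x := by
  constructor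
  · rintro rfl; exact flipAt_flipAt ι k x
  · rintro rfl; exact (flipAt_flipAt ι k y).symm

lemma flipAt_comm (k l : ι) (x : ι → Fin 2) :
    flipAt ι k (flipAt ι l x) = flipAt ι l (flipAt ι k x) := by
  rcases eq_or_ne k l with rfl | h
  · rfl
  · show Function.update (Function.update x l (x l + 1)) k
        ((Function.update x l (x l + 1)) k + 1) = Function.update (Function.update x k (x k + 1)) l
        ((Function.update x k (x k + 1)) l + 1)
    rw [Function.update_of_ne h, Function.update_of_ne h.symm, Function.update_comm h]

lemma flipAt_apply_ne (k l : ι) (h : l ≠ k) (x : ι → Fin 2) : flipAt ι k x l = x l :=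
  Function.update_of_ne h _ _

lemma XMat_eq (k : ι) : XMat ι k = Matrix.of fun x y => if y = flipAt ι k x then (1:ℂ) else 0 := rfl

lemma XMat_mul_apply (k : ι) (M : PMat ι) (x y : ι → Fin 2) :
    (XMat ι k * M) x y = M (flipAt ι k x) y := by
  rw [Matrix.mul_apply]
  simp only [XMat_eq, Matrix.of_apply, ite_mul, one_mul, zero_mul]
  exact Finset.sum_ite_eq' Finset.univ (flipAt ι k x) (fun z => M z y) |>.trans (by simp)

lemma mul_XMat_apply (k : ι) (M : PMat ι) (x y : ι → Fin 2) :
    (M * XMat ι k) x y = M x (flipAt ι k y) := by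
  rw [Matrix.mul_apply]
  have : ∀ z, (if y = flipAt ι k z then (1:ℂ) else 0) = if z = flipAt ι k y then 1 else 0 := by
    intro z
    congr 1
    rw [eq_iff_iff, flipAt_eq_iff, eq_comm, flipAt_eq_iff, eq_comm]
  simp only [XMat_eq, Matrix.of_apply, this, mul_ite, mul_one, mul_zero]
  exact Finset.sum_ite_eq' Finset.univ (flipAt ι k y) (fun z => M x z) |>.trans (by simp)

lemma XMat_comm (k l : ι) : XMat ι k * XMat ι l = XMat ι l * XMat ι k := by
  ext x y
  rw [XMat_mul_apply, mul_XMat_apply]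
  simp only [XMat_eq, Matrix.of_apply]
  congr 1
  rw [eq_iff_iff]
  constructor
  · rintro rfl
    rw [flipAt_comm ι k l, flipAt_flipAt]
  · intro h
    have : y = flipAt ι k (flipAt ι l x) := by rw [← h, flipAt_flipAt]
    rw [this, flipAt_comm]

lemma ZMat_comm (k l : ι) : ZMat ι k * ZMat ι l = ZMat ι l * ZMat ι k := by
  ext x y
  simp only [ZMat, Matrix.diagonal_mul_diagonal, Matrix.diagonal_apply]
  split_ifs
  · ring
  · rfl

lemma XMat_ZMat_of_ne (k l : ι) (h : l ≠ k) : XMat ι k * ZMat ι l = ZMat ι l * XMat ι k := by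
  ext x y
  rw [ZMat, Matrix.mul_diagonal, Matrix.diagonal_mul]
  show (if y = flipAt ι k x then (1:ℂ) else 0) * (-1)^(y l : ℕ)
    = (-1)^(x l : ℕ) * (if y = flipAt ι k x then (1:ℂ) else 0)
  rcases eq_or_ne y (flipAt ι k x) with rfl | hne
  · simp [flipAt_apply_ne ι k l h]
  · simp [hne]

lemma neg_one_pow_fin2_succ (a : Fin 2) : ((-1:ℂ))^((a+1 : Fin 2):ℕ) = -(-1:ℂ)^((a:ℕ)) := by
  have h2 : ∀ a : Fin 2, ((a + 1 : Fin 2) : ℕ) = 1 - (a:ℕ) := by decide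
  rw [h2]; fin_cases a <;> norm_num

lemma XMat_ZMat_self (k : ι) : XMat ι k * ZMat ι k = -(ZMat ι k * XMat ι k) := by
  ext x y
  rw [ZMat, Matrix.neg_apply, Matrix.mul_diagonal, Matrix.diagonal_mul]
  show (if y = flipAt ι k x then (1:ℂ) else 0) * (-1)^(y k : ℕ)
    = -((-1)^(x k : ℕ) * (if y = flipAt ι k x then (1:ℂ) else 0))
  rcases eq_or_ne y (flipAt ι k x) with rfl | hne
  · have : flipAt ι k x k = x k + 1 := Function.update_self k _ x
    rw [this, neg_one_pow_fin2_succ]; ring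
  · simp [hne]

end Stage1
section Stage2
variable (ι : Type) [Fintype ι] [DecidableEq ι]

lemma XU_inv (k : ι) : (XU ι k)⁻¹ = XU ι k := Units.ext rfl

lemma ZU_inv (k : ι) : (ZU ι k)⁻¹ = ZU ι k := Units.ext rfl

/-- A sign: `1` or `-1` in the unit group. -/
def IsSign (ε : (PMat ι)ˣ) : Prop := ε = 1 ∨ ε = -1

lemma sign_central {ε : (PMat ι)ˣ} (hε : IsSign ι ε) (u : (PMat ι)ˣ) : ε * u = u * ε := by
  rcases hε with rfl | rfl
  · rw [one_mul, mul_one]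
  · apply Units.ext
    show ((-1 : (PMat ι)ˣ) : PMat ι) * (u : PMat ι) = (u : PMat ι) * ((-1 : (PMat ι)ˣ) : PMat ι)
    simp

lemma isSign_mul {ε₁ ε₂ : (PMat ι)ˣ} (h₁ : IsSign ι ε₁) (h₂ : IsSign ι ε₂) :
    IsSign ι (ε₁ * ε₂) := by
  rcases h₁ with rfl | rfl <;> rcases h₂ with rfl | rfl
  · left; rw [one_mul]
  · right; rw [one_mul]
  · right; rw [mul_one]
  · left; apply Units.ext; simp

lemma sign_sq {ε : (PMat ι)ˣ} (hε : IsSign ι ε) : ε * ε = 1 := by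
  rcases hε with rfl | rfl
  · rw [one_mul]
  · apply Units.ext; simp

lemma sign_inv {ε : (PMat ι)ˣ} (hε : IsSign ι ε) : ε⁻¹ = ε := by
  rw [inv_eq_iff_mul_eq_one, sign_sq ι hε]

/-- Two operators commute up to a sign. -/
def PComm (g h : (PMat ι)ˣ) : Prop :=
  ∃ ε : (PMat ι)ˣ, IsSign ι ε ∧ g * h = ε * (h * g)

lemma PComm.symm {g h : (PMat ι)ˣ} (hgh : PComm ι g h) : PComm ι h g := by
  obtain ⟨ε, hε, he⟩ := hgh
  refine ⟨ε, hε, ?_⟩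
  rw [he, ← mul_assoc, sign_sq ι hε, one_mul]

lemma PComm_of_comm {g h : (PMat ι)ˣ} (hc : g * h = h * g) : PComm ι g h :=
  ⟨1, Or.inl rfl, by rw [hc, one_mul]⟩

lemma PComm_one (h : (PMat ι)ˣ) : PComm ι 1 h := PComm_of_comm ι (by rw [one_mul, mul_one])

lemma PComm.mul_left {g₁ g₂ h : (PMat ι)ˣ} (h₁ : PComm ι g₁ h) (h₂ : PComm ι g₂ h) :
    PComm ι (g₁ * g₂) h := by
  obtain ⟨ε₁, hε₁, he₁⟩ := h₁
  obtain ⟨ε₂, hε₂, he₂⟩ := h₂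
  rcases hε₁ with rfl | rfl <;> rcases hε₂ with rfl | rfl <;>
      simp only [one_mul, neg_one_mul] at he₁ he₂
  · exact ⟨1, Or.inl rfl, by rw [one_mul, mul_assoc, he₂, ← mul_assoc, he₁, mul_assoc]⟩
  · exact ⟨-1, Or.inr rfl, by
      rw [neg_one_mul, mul_assoc, he₂, mul_neg, ← mul_assoc, he₁, mul_assoc]⟩
  · exact ⟨-1, Or.inr rfl, by
      rw [neg_one_mul, mul_assoc, he₂, ← mul_assoc, he₁, neg_mul, mul_assoc]⟩
  · exact ⟨1, Or.inl rfl, by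
      rw [one_mul, mul_assoc, he₂, mul_neg, ← mul_assoc, he₁, neg_mul, neg_neg, mul_assoc]⟩

lemma PComm.inv_left {g h : (PMat ι)ˣ} (hgh : PComm ι g h) : PComm ι g⁻¹ h := by
  obtain ⟨ε, hε, he⟩ := hgh
  have base : g⁻¹ * h = g⁻¹ * (h * g) * g⁻¹ := by
    rw [mul_assoc g⁻¹ (h * g), mul_assoc h, mul_inv_cancel, mul_one]
  rcases hε with rfl | rfl <;> simp only [one_mul, neg_one_mul] at he
  · refine ⟨1, Or.inl rfl, ?_⟩
    rw [one_mul, base, ← he, ← mul_assoc g⁻¹ g, inv_mul_cancel, one_mul]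
  · refine ⟨-1, Or.inr rfl, ?_⟩
    have he' : h * g = -(g * h) := by rw [he, neg_neg]
    rw [neg_one_mul, base, he', mul_neg, neg_mul, ← mul_assoc g⁻¹ g, inv_mul_cancel, one_mul]

end Stage2
section Stage2b
variable (ι : Type) [Fintype ι] [DecidableEq ι]

lemma PComm_XU_XU (k l : ι) : PComm ι (XU ι k) (XU ι l) :=
  PComm_of_comm ι (Units.ext (XMat_comm ι k l))

lemma PComm_ZU_ZU (k l : ι) : PComm ι (ZU ι k) (ZU ι l) :=
  PComm_of_comm ι (Units.ext (ZMat_comm ι k l))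

lemma PComm_XU_ZU (k l : ι) : PComm ι (XU ι k) (ZU ι l) := by
  rcases eq_or_ne l k with rfl | h
  · refine ⟨-1, Or.inr rfl, Units.ext ?_⟩
    show XMat ι l * ZMat ι l = ((-1 : (PMat ι)ˣ) : PMat ι) * (ZMat ι l * XMat ι l)
    rw [XMat_ZMat_self]
    simp
  · exact PComm_of_comm ι (Units.ext (XMat_ZMat_of_ne ι k l h))

lemma PComm_iU_left (h : (PMat ι)ˣ) : PComm ι (iU ι) h := PComm_of_comm ι (iU_central ι h)

/-- the Pauli generating set -/
def PGens : Set (PMat ι)ˣ := ({iU ι} ∪ Set.range (XU ι) ∪ Set.range (ZU ι))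

lemma pauliGroup_eq_closure : PauliGroup ι = Subgroup.closure (PGens ι) := rfl

lemma PComm_gens {g h : (PMat ι)ˣ} (hg : g ∈ PGens ι) (hh : h ∈ PGens ι) : PComm ι g h := by
  rcases hg with (rfl | ⟨k, rfl⟩) | ⟨k, rfl⟩
  · exact PComm_iU_left ι h
  all_goals rcases hh with (rfl | ⟨l, rfl⟩) | ⟨l, rfl⟩
  · exact (PComm_iU_left ι _).symm
  · exact PComm_XU_XU ι k l
  · exact PComm_XU_ZU ι k l
  · exact (PComm_iU_left ι _).symm
  · exact (PComm_XU_ZU ι l k).symm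
  · exact PComm_ZU_ZU ι k l

lemma PComm_gen_pauli {h : (PMat ι)ˣ} (hh : h ∈ PGens ι) :
    ∀ g ∈ PauliGroup ι, PComm ι g h := by
  intro g hg
  rw [pauliGroup_eq_closure] at hg
  induction hg using Subgroup.closure_induction with
  | mem y hy => exact PComm_gens ι hy hh
  | one => exact PComm_one ι h
  | mul a b _ _ ha hb => exact PComm.mul_left ι ha hb
  | inv a _ ha => exact PComm.inv_left ι ha

lemma pauli_pcomm {g h : (PMat ι)ˣ} (hg : g ∈ PauliGroup ι) (hh : h ∈ PauliGroup ι) :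
    PComm ι g h := by
  rw [pauliGroup_eq_closure] at hh
  induction hh using Subgroup.closure_induction with
  | mem y hy => exact PComm_gen_pauli ι hy g hg
  | one => exact (PComm_one ι g).symm
  | mul a b _ _ ha hb => exact (PComm.mul_left ι ha.symm hb.symm).symm
  | inv a _ ha => exact (PComm.inv_left ι ha.symm).symm

/-- Pauli operators are unitary: the conjugate transpose is the inverse. -/
lemma pauli_conjTranspose {g : (PMat ι)ˣ} (hg : g ∈ PauliGroup ι) :
    (g : PMat ι)ᴴ = ((g⁻¹ : (PMat ι)ˣ) : PMat ι) := by
  rw [pauliGroup_eq_closure] at hg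
  induction hg using Subgroup.closure_induction with
  | mem y hy =>
    rcases hy with (rfl | ⟨k, rfl⟩) | ⟨k, rfl⟩
    · show (Complex.I • (1 : PMat ι))ᴴ = (-Complex.I) • (1 : PMat ι)
      rw [Matrix.conjTranspose_smul]
      simp [Complex.conj_I]
    · show (XMat ι k)ᴴ = XMat ι k
      ext x y
      rw [Matrix.conjTranspose_apply, XMat_eq]
      simp only [Matrix.of_apply]
      rcases eq_or_ne y (flipAt ι k x) with rfl | hne
      · rw [if_pos (by rw [flipAt_flipAt]), if_pos rfl]
        simp
      · rw [if_neg (by rw [flipAt_eq_iff, eq_comm]; exact hne), if_neg hne]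
        simp
    · show (ZMat ι k)ᴴ = ZMat ι k
      have hst : star (fun x : ι → Fin 2 => ((-1:ℂ))^(x k : ℕ)) =
          fun x : ι → Fin 2 => ((-1:ℂ))^(x k : ℕ) :=
        funext fun u => by rw [Pi.star_apply, star_pow, star_neg, star_one]
      rw [ZMat, Matrix.diagonal_conjTranspose, hst]
  | one => simp
  | mul a b ha hb iha ihb =>
    show ((a : PMat ι) * (b : PMat ι))ᴴ = _
    rw [Matrix.conjTranspose_mul, iha, ihb]
    rfl
  | inv a ha iha =>
    show ((a⁻¹ : (PMat ι)ˣ) : PMat ι)ᴴ = ((a : (PMat ι)ˣ) : PMat ι)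
    conv_rhs => rw [← Matrix.conjTranspose_conjTranspose (a : PMat ι)]
    rw [iha]

lemma neg_one_ne_one_units : (-1 : (PMat ι)ˣ) ≠ 1 := by
  intro h
  have h3 := congrArg (fun M : PMat ι => M (fun _ => 0) (fun _ => 0)) (congrArg Units.val h)
  simp only [Units.val_neg, Units.val_one, Matrix.neg_apply, Matrix.one_apply_eq] at h3
  norm_num at h3

end Stage2b
section Stage3
variable (m : ℕ)

lemma fn_eq_iff_zero_tail (x y : Fin (m+1) → Fin 2) :
    x = y ↔ x 0 = y 0 ∧ Fin.tail x = Fin.tail y := by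
  constructor
  · rintro rfl; exact ⟨rfl, rfl⟩
  · rintro ⟨h0, ht⟩
    rw [← Fin.cons_self_tail x, ← Fin.cons_self_tail y, h0, ht]

/-- The embedding of `m`-qubit operators into `(m+1)`-qubit operators as `1 ⊗ M`. -/
def matE (M : PMat (Fin m)) : PMat (Fin (m+1)) :=
  Matrix.of fun x y => if x 0 = y 0 then M (Fin.tail x) (Fin.tail y) else 0

lemma matE_apply (M : PMat (Fin m)) (x y : Fin (m+1) → Fin 2) :
    matE m M x y = if x 0 = y 0 then M (Fin.tail x) (Fin.tail y) else 0 := rfl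

lemma matE_one : matE m 1 = 1 := by
  ext x y
  rw [matE_apply]
  rcases eq_or_ne x y with rfl | hne
  · simp [Matrix.one_apply_eq]
  · rw [Matrix.one_apply_ne hne]
    rcases eq_or_ne (x 0) (y 0) with h0 | h0
    · rw [if_pos h0]
      have ht : Fin.tail x ≠ Fin.tail y := fun h => hne ((fn_eq_iff_zero_tail m x y).mpr ⟨h0, h⟩)
      exact Matrix.one_apply_ne ht
    · rw [if_neg h0]

lemma matE_mul (M N : PMat (Fin m)) : matE m (M * N) = matE m M * matE m N := by
  ext x y
  rw [Matrix.mul_apply]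
  have hsum := Equiv.sum_comp (Fin.consEquiv (fun _ : Fin (m+1) => Fin 2))
    (fun z => matE m M x z * matE m N z y)
  rw [← hsum, Fintype.sum_prod_type]
  have heval : ∀ c : Fin 2,
      (∑ t : Fin m → Fin 2, matE m M x (Fin.consEquiv _ (c, t)) *
        matE m N (Fin.consEquiv _ (c, t)) y)
      = if x 0 = c then (if c = y 0 then
          ∑ t : Fin m → Fin 2, M (Fin.tail x) t * N t (Fin.tail y) else 0) else 0 := by
    intro c
    have : ∀ t : Fin m → Fin 2, (Fin.consEquiv (fun _ : Fin (m+1) => Fin 2)) (c, t) =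
        Fin.cons c t := fun t => rfl
    simp only [this, matE_apply, Fin.cons_zero, Fin.tail_cons]
    by_cases h1 : x 0 = c <;> by_cases h2 : c = y 0 <;>
      simp [h1, h2, Finset.mul_sum]
  rw [Finset.sum_congr rfl (fun c _ => heval c)]
  rw [Finset.sum_ite_eq Finset.univ (x 0)
    (fun c => if c = y 0 then ∑ t, M (Fin.tail x) t * N t (Fin.tail y) else 0)]
  simp only [Finset.mem_univ, if_true]
  rw [matE_apply, Matrix.mul_apply]

lemma matE_smul (c : ℂ) (M : PMat (Fin m)) : matE m (c • M) = c • matE m M := by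
  ext x y
  simp only [matE_apply, Matrix.smul_apply]
  split_ifs <;> simp

lemma matE_neg (M : PMat (Fin m)) : matE m (-M) = -(matE m M) := by
  have h := matE_smul m (-1) M
  rwa [neg_one_smul, neg_one_smul] at h

lemma matE_injective : Function.Injective (matE m) := by
  intro M N h
  ext a b
  have := congrFun (congrFun h (Fin.cons 0 a)) (Fin.cons 0 b)
  rw [matE_apply, matE_apply] at this
  simpa [Fin.cons_zero, Fin.tail_cons] using this

lemma flipAt_succ_apply_zero (j : Fin m) (x : Fin (m+1) → Fin 2) :
    flipAt (Fin (m+1)) j.succ x 0 = x 0 := by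
  show Function.update x j.succ (x j.succ + 1) 0 = x 0
  exact Function.update_of_ne (Fin.succ_ne_zero j).symm _ _

lemma tail_flipAt_succ (j : Fin m) (x : Fin (m+1) → Fin 2) :
    Fin.tail (flipAt (Fin (m+1)) j.succ x) = flipAt (Fin m) j (Fin.tail x) := by
  show Fin.tail (Function.update x j.succ (x j.succ + 1)) = _
  rw [Fin.tail_update_succ]
  rfl

lemma tail_flipAt_zero (x : Fin (m+1) → Fin 2) :
    Fin.tail (flipAt (Fin (m+1)) 0 x) = Fin.tail x := by
  show Fin.tail (Function.update x 0 (x 0 + 1)) = Fin.tail x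
  exact Fin.tail_update_zero x (x 0 + 1)

lemma matE_XMat (j : Fin m) : matE m (XMat (Fin m) j) = XMat (Fin (m+1)) j.succ := by
  ext x y
  rw [matE_apply, XMat_eq, XMat_eq]
  simp only [Matrix.of_apply]
  have key : (y = flipAt (Fin (m+1)) j.succ x) ↔
      (x 0 = y 0 ∧ Fin.tail y = flipAt (Fin m) j (Fin.tail x)) := by
    rw [fn_eq_iff_zero_tail]
    constructor
    · rintro ⟨h0, ht⟩
      refine ⟨?_, ?_⟩
      · rw [h0]; exact (flipAt_succ_apply_zero m j x).symm
      · rw [ht, tail_flipAt_succ]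
    · rintro ⟨h0, ht⟩
      refine ⟨?_, ?_⟩
      · rw [← h0]; exact flipAt_succ_apply_zero m j x
      · rw [ht, tail_flipAt_succ]
  rcases eq_or_ne (x 0) (y 0) with h0 | h0
  · rw [if_pos h0]
    congr 1
    rw [eq_iff_iff, key]
    exact ⟨fun h => ⟨h0, h⟩, fun h => h.2⟩
  · rw [if_neg h0, if_neg (fun h => h0 (key.mp h).1)]

lemma matE_ZMat (j : Fin m) : matE m (ZMat (Fin m) j) = ZMat (Fin (m+1)) j.succ := by
  ext x y
  rw [matE_apply, ZMat, ZMat]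
  rcases eq_or_ne x y with rfl | hne
  · rw [if_pos rfl, Matrix.diagonal_apply_eq, Matrix.diagonal_apply_eq]
    rfl
  · rw [Matrix.diagonal_apply_ne _ hne]
    rcases eq_or_ne (x 0) (y 0) with h0 | h0
    · rw [if_pos h0]
      have ht : Fin.tail x ≠ Fin.tail y := fun h => hne ((fn_eq_iff_zero_tail m x y).mpr ⟨h0, h⟩)
      exact Matrix.diagonal_apply_ne _ ht
    · rw [if_neg h0]

lemma matE_iMat : matE m (Complex.I • 1) = Complex.I • (1 : PMat (Fin (m+1))) := by
  rw [matE_smul, matE_one]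

lemma fin2_eq_add_one_iff (a b : Fin 2) : (a = b + 1) ↔ (a + 1 = b) := by
  revert a b; decide

lemma matE_comm_XMat0 (M : PMat (Fin m)) :
    matE m M * XMat (Fin (m+1)) 0 = XMat (Fin (m+1)) 0 * matE m M := by
  ext x y
  rw [mul_XMat_apply, XMat_mul_apply, matE_apply, matE_apply]
  have h1 : flipAt (Fin (m+1)) 0 y 0 = y 0 + 1 := Function.update_self _ _ _
  have h2 : flipAt (Fin (m+1)) 0 x 0 = x 0 + 1 := Function.update_self _ _ _
  have h3 : Fin.tail (flipAt (Fin (m+1)) 0 y) = Fin.tail y := tail_flipAt_zero m y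
  have h4 : Fin.tail (flipAt (Fin (m+1)) 0 x) = Fin.tail x := tail_flipAt_zero m x
  rw [h1, h2, h3, h4]
  by_cases hc : x 0 + 1 = y 0
  · rw [if_pos ((fin2_eq_add_one_iff _ _).mpr hc), if_pos hc]
  · rw [if_neg (fun h => hc ((fin2_eq_add_one_iff _ _).mp h)), if_neg hc]

lemma matE_comm_ZMat0 (M : PMat (Fin m)) :
    matE m M * ZMat (Fin (m+1)) 0 = ZMat (Fin (m+1)) 0 * matE m M := by
  ext x y
  rw [ZMat, Matrix.mul_diagonal, Matrix.diagonal_mul, matE_apply]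
  rcases eq_or_ne (x 0) (y 0) with h0 | h0
  · rw [if_pos h0, h0]
    exact mul_comm _ _
  · rw [if_neg h0]
    simp

/-- `matE` as a monoid hom for matrix multiplication. -/
def EHom : PMat (Fin m) →* PMat (Fin (m+1)) where
  toFun := matE m
  map_one' := matE_one m
  map_mul' := matE_mul m

/-- The embedding on units. -/
def EU : (PMat (Fin m))ˣ →* (PMat (Fin (m+1)))ˣ := Units.map (EHom m)

lemma EU_val (u : (PMat (Fin m))ˣ) : ((EU m u : (PMat (Fin (m+1)))ˣ) : PMat (Fin (m+1)))
    = matE m (u : PMat (Fin m)) := rfl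

lemma EU_injective : Function.Injective (EU m) := by
  intro u v h
  apply Units.ext
  apply matE_injective m
  rw [← EU_val, ← EU_val, h]

lemma EU_iU : EU m (iU (Fin m)) = iU (Fin (m+1)) :=
  Units.ext (matE_iMat m)

lemma EU_XU (j : Fin m) : EU m (XU (Fin m) j) = XU (Fin (m+1)) j.succ :=
  Units.ext (matE_XMat m j)

lemma EU_ZU (j : Fin m) : EU m (ZU (Fin m) j) = ZU (Fin (m+1)) j.succ :=
  Units.ext (matE_ZMat m j)

lemma EU_neg_one : EU m (-1) = -1 := by
  apply Units.ext
  rw [EU_val]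
  show matE m (-(1 : PMat (Fin m))) = ((-1 : (PMat (Fin (m+1)))ˣ) : PMat (Fin (m+1)))
  rw [matE_neg, matE_one]
  simp

lemma EU_comm_XU0 (u : (PMat (Fin m))ˣ) :
    EU m u * XU (Fin (m+1)) 0 = XU (Fin (m+1)) 0 * EU m u :=
  Units.ext (matE_comm_XMat0 m _)

lemma EU_comm_ZU0 (u : (PMat (Fin m))ˣ) :
    EU m u * ZU (Fin (m+1)) 0 = ZU (Fin (m+1)) 0 * EU m u :=
  Units.ext (matE_comm_ZMat0 m _)

lemma EU_mem {q : (PMat (Fin m))ˣ} (hq : q ∈ PauliGroup (Fin m)) :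
    EU m q ∈ PauliGroup (Fin (m+1)) := by
  rw [pauliGroup_eq_closure] at hq
  induction hq using Subgroup.closure_induction with
  | mem y hy =>
    rcases hy with (rfl | ⟨j, rfl⟩) | ⟨j, rfl⟩
    · rw [EU_iU]; exact iU_mem _
    · rw [EU_XU]; exact XU_mem _ _
    · rw [EU_ZU]; exact ZU_mem _ _
  | one => rw [_root_.map_one]; exact one_mem _
  | mul a b _ _ ha hb => rw [_root_.map_mul]; exact mul_mem ha hb
  | inv a _ ha => rw [_root_.map_inv]; exact inv_mem ha

lemma pmatUnits_ne_neg_self (ι : Type) [Fintype ι] [DecidableEq ι] (u : (PMat ι)ˣ) : u ≠ -u := by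
  intro h
  have : (1 : (PMat ι)ˣ) = -1 := by
    calc (1 : (PMat ι)ˣ) = u⁻¹ * u := (inv_mul_cancel u).symm
      _ = u⁻¹ * (-u) := by rw [← h]
      _ = -(u⁻¹ * u) := by rw [mul_neg]
      _ = -1 := by rw [inv_mul_cancel]
  exact neg_one_ne_one_units ι this.symm

end Stage3
section Stage4

lemma XU_sq (ι : Type) [Fintype ι] [DecidableEq ι] (k : ι) : XU ι k * XU ι k = 1 :=
  Units.ext (XMat_mul_self ι k)

lemma ZU_sq (ι : Type) [Fintype ι] [DecidableEq ι] (k : ι) : ZU ι k * ZU ι k = 1 :=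
  Units.ext (ZMat_mul_self ι k)

lemma XU_ZU_anticomm (ι : Type) [Fintype ι] [DecidableEq ι] (k : ι) :
    XU ι k * ZU ι k = -(ZU ι k * XU ι k) := by
  apply Units.ext
  show XMat ι k * ZMat ι k = -(ZMat ι k * XMat ι k)
  exact XMat_ZMat_self ι k

lemma pow_invol {G : Type*} [Group G] {u : G} (h : u * u = 1) (a : ℕ) :
    u ^ a = if a % 2 = 0 then 1 else u := by
  induction a with
  | zero => simp
  | succ a ih =>
    rw [pow_succ, ih]
    rcases Nat.even_or_odd a with ⟨c, hc⟩ | ⟨c, hc⟩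
    · have h2 : a % 2 = 0 := by omega
      have h3 : (a + 1) % 2 = 1 := by omega
      rw [h2, h3]
      simp
    · have h2 : a % 2 = 1 := by omega
      have h3 : (a + 1) % 2 = 0 := by omega
      rw [h2, h3]
      simp [h]

lemma neg_one_mem_pauli (ι : Type) [Fintype ι] [DecidableEq ι] :
    (-1 : (PMat ι)ˣ) ∈ PauliGroup ι := by
  have h : iU ι * iU ι = -1 := by
    apply Units.ext
    show (Complex.I • (1 : PMat ι)) * (Complex.I • (1 : PMat ι)) = ((-1 : (PMat ι)ˣ) : PMat ι)
    rw [smul_mul_smul_comm, Complex.I_mul_I, one_mul]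
    simp
  rw [← h]
  exact mul_mem (iU_mem ι) (iU_mem ι)

lemma swap3 {G : Type*} [Group G] {u v : G} (h : u * v = v * u) (w : G) :
    u * (v * w) = v * (u * w) := by rw [← mul_assoc, h, mul_assoc]

lemma swap_sign {G : Type*} [Group G] {u v ε : G} (h : u * v = ε * (v * u)) (w : G) :
    u * (v * w) = ε * (v * (u * w)) := by rw [← mul_assoc, h, mul_assoc, mul_assoc]

variable (m : ℕ)

lemma EU_neg (u : (PMat (Fin m))ˣ) : EU m (-u) = -(EU m u) := by
  apply Units.ext
  show matE m (-(u : PMat (Fin m))) = -(matE m (u : PMat (Fin m)))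
  exact matE_neg m _

lemma EU_comm_XU0_pow (u : (PMat (Fin m))ˣ) (i : ℕ) :
    (XU (Fin (m+1)) 0) ^ i * EU m u = EU m u * (XU (Fin (m+1)) 0) ^ i := by
  have hcomm : Commute (EU m u) (XU (Fin (m+1)) 0) := EU_comm_XU0 m u
  exact (hcomm.symm.pow_left i).eq

lemma EU_comm_ZU0_pow (u : (PMat (Fin m))ˣ) (i : ℕ) :
    (ZU (Fin (m+1)) 0) ^ i * EU m u = EU m u * (ZU (Fin (m+1)) 0) ^ i := by
  have hcomm : Commute (EU m u) (ZU (Fin (m+1)) 0) := EU_comm_ZU0 m u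
  exact (hcomm.symm.pow_left i).eq

lemma pauli_structure {g : (PMat (Fin (m+1)))ˣ} (hg : g ∈ PauliGroup (Fin (m+1))) :
    ∃ q a b, q ∈ PauliGroup (Fin m) ∧
      g = EU m q * (XU (Fin (m+1)) 0) ^ a * (ZU (Fin (m+1)) 0) ^ b := by
  rw [pauliGroup_eq_closure] at hg
  induction hg using Subgroup.closure_induction with
  | mem y hy =>
    rcases hy with (rfl | ⟨k, rfl⟩) | ⟨k, rfl⟩
    · exact ⟨iU (Fin m), 0, 0, iU_mem _, by rw [EU_iU]; simp⟩
    · induction k using Fin.cases with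
      | zero => exact ⟨1, 1, 0, one_mem _, by rw [_root_.map_one]; simp⟩
      | succ j => exact ⟨XU (Fin m) j, 0, 0, XU_mem _ _, by rw [EU_XU]; simp⟩
    · induction k using Fin.cases with
      | zero => exact ⟨1, 0, 1, one_mem _, by rw [_root_.map_one]; simp⟩
      | succ j => exact ⟨ZU (Fin m) j, 0, 0, ZU_mem _ _, by rw [EU_ZU]; simp⟩
  | one => exact ⟨1, 0, 0, one_mem _, by rw [_root_.map_one]; simp⟩
  | mul g g' _ _ ihg ihg' =>
    obtain ⟨q, a, b, hq, rfl⟩ := ihg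
    obtain ⟨q', c, d, hq', rfl⟩ := ihg'
    obtain ⟨ε, hε, he⟩ := pauli_pcomm (Fin (m+1))
      (pow_mem (ZU_mem (Fin (m+1)) 0) b) (pow_mem (XU_mem (Fin (m+1)) 0) c)
    simp only [mul_assoc]
    rw [swap3 (EU_comm_ZU0_pow m q' b), swap3 (EU_comm_XU0_pow m q' a),
      swap_sign he]
    rcases hε with rfl | rfl
    · refine ⟨q * q', a + c, b + d, mul_mem hq hq', ?_⟩
      simp only [one_mul, _root_.map_mul, pow_add, mul_assoc]
    · refine ⟨-(q * q'), a + c, b + d, ?_, ?_⟩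
      · rw [show -(q * q') = -1 * (q * q') from (neg_one_mul _).symm]
        exact mul_mem (neg_one_mem_pauli _) (mul_mem hq hq')
      · rw [EU_neg]
        simp only [_root_.map_mul, pow_add, mul_assoc, neg_one_mul, neg_mul, mul_neg, one_mul]
  | inv g _ ihg =>
    obtain ⟨q, a, b, hq, rfl⟩ := ihg
    obtain ⟨ε, hε, he⟩ := pauli_pcomm (Fin (m+1))
      (pow_mem (ZU_mem (Fin (m+1)) 0) b) (pow_mem (XU_mem (Fin (m+1)) 0) a)
    have hinv : (EU m q * (XU (Fin (m+1)) 0) ^ a * (ZU (Fin (m+1)) 0) ^ b)⁻¹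
        = (ZU (Fin (m+1)) 0) ^ b * ((XU (Fin (m+1)) 0) ^ a * EU m (q⁻¹)) := by
      rw [_root_.mul_inv_rev, _root_.mul_inv_rev, ← inv_pow, ← inv_pow, XU_inv, ZU_inv, _root_.map_inv]
    rw [hinv, EU_comm_XU0_pow m (q⁻¹) a, swap3 (EU_comm_ZU0_pow m (q⁻¹) b), he]
    rcases hε with rfl | rfl
    · exact ⟨q⁻¹, a, b, inv_mem hq, by simp only [one_mul, mul_assoc]⟩
    · refine ⟨-q⁻¹, a, b, ?_, ?_⟩
      · rw [show -q⁻¹ = -1 * q⁻¹ from (neg_one_mul _).symm]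
        exact mul_mem (neg_one_mem_pauli _) (inv_mem hq)
      · rw [EU_neg]
        simp only [mul_assoc, neg_one_mul, neg_mul, mul_neg, one_mul]

lemma pauli_structure_centralizing {g : (PMat (Fin (m+1)))ˣ}
    (hg : g ∈ PauliGroup (Fin (m+1)))
    (hc : g * XU (Fin (m+1)) 0 = XU (Fin (m+1)) 0 * g) :
    ∃ q a, q ∈ PauliGroup (Fin m) ∧ g = EU m q * (XU (Fin (m+1)) 0) ^ a := by
  obtain ⟨q, a, b, hq, rfl⟩ := pauli_structure m hg
  rcases Nat.even_or_odd b with hb | hb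
  · refine ⟨q, a, hq, ?_⟩
    rw [pow_invol (ZU_sq _ 0) b, if_pos (by rcases hb with ⟨c, hc'⟩; omega), mul_one]
  · exfalso
    rw [pow_invol (ZU_sq _ 0) b, if_neg (by rcases hb with ⟨c, hc'⟩; omega)] at hc
    set X := XU (Fin (m+1)) 0
    set Z := ZU (Fin (m+1)) 0
    have hXa : X ^ a * X = X * X ^ a := ((Commute.refl X).pow_left a).eq
    have key : Z * X = X * Z := by
      have h1 : EU m q * (X ^ a * (Z * X)) = EU m q * (X ^ a * (X * Z)) := by
        calc EU m q * (X ^ a * (Z * X)) = EU m q * X ^ a * Z * X := by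
              simp only [mul_assoc]
          _ = X * (EU m q * X ^ a * Z) := hc
          _ = EU m q * (X * (X ^ a * Z)) := by
              rw [mul_assoc (EU m q), ← swap3 (EU_comm_XU0 m q).symm]
          _ = EU m q * (X ^ a * (X * Z)) := by rw [swap3 hXa.symm]
      exact mul_left_cancel (mul_left_cancel h1)
    have h2 : X * Z = -(X * Z) := by
      conv_lhs => rw [XU_ZU_anticomm, key]
    exact pmatUnits_ne_neg_self _ _ h2

end Stage4
section Stage5

lemma comm_inv {G : Type*} [Group G] {g v : G} (h : g * v = v * g) : g⁻¹ * v = v * g⁻¹ := by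
  calc g⁻¹ * v = g⁻¹ * (v * g) * g⁻¹ := by
        rw [mul_assoc g⁻¹ (v * g) g⁻¹, mul_assoc v g g⁻¹, mul_inv_cancel, mul_one]
    _ = g⁻¹ * (g * v) * g⁻¹ := by rw [h]
    _ = v * g⁻¹ := by rw [← mul_assoc g⁻¹ g v, inv_mul_cancel, one_mul]

lemma centralizes_mem_normalizer {G : Type*} [Group G] {K : Subgroup G} {g : G}
    (h : ∀ s ∈ K, g * s = s * g) : g ∈ Subgroup.normalizer (K : Set G) := by
  rw [Subgroup.mem_normalizer_iff]
  intro u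
  constructor
  · intro hu
    have he : g * u * g⁻¹ = u := by rw [h u hu, mul_assoc, mul_inv_cancel, mul_one]
    rw [he]; exact hu
  · intro hu
    have h2 : u = g⁻¹ * (g * u * g⁻¹) * g := by group
    rw [h2, comm_inv (h _ hu), mul_assoc, inv_mul_cancel, mul_one]
    exact hu

lemma pauli_conj_pm (ι : Type) [Fintype ι] [DecidableEq ι] {g h : (PMat ι)ˣ}
    (hg : g ∈ PauliGroup ι) (hh : h ∈ PauliGroup ι) :
    g * h * g⁻¹ = h ∨ g * h * g⁻¹ = -h := by
  obtain ⟨ε, hε, he⟩ := pauli_pcomm ι hg hh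
  rcases hε with rfl | rfl
  · left
    rw [one_mul] at he
    rw [he, mul_assoc, mul_inv_cancel, mul_one]
  · right
    rw [neg_one_mul] at he
    rw [he, neg_mul, mul_assoc, mul_inv_cancel, mul_one]

lemma subtype_pow_val {G : Type*} [Group G] {K : Subgroup G} (a : ↥K) (i : ℕ) :
    ((a ^ i : ↥K) : G) = (a : G) ^ i := by
  induction i with
  | zero => simp
  | succ i ih => rw [pow_succ, pow_succ, ← ih]; rfl

lemma quot_mk_pow {G : Type*} [Group G] {K : Subgroup G} [K.Normal] (a : G) (i : ℕ) :
    (QuotientGroup.mk (a ^ i) : G ⧸ K) = (QuotientGroup.mk a : G ⧸ K) ^ i := by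
  induction i with
  | zero => simp
  | succ i ih => rw [pow_succ, pow_succ, ← ih]; rfl

end Stage5
/-- Case 1 of the normalizer formalism: measuring a Hermitian Pauli `p` that commutes with
the stabilizer group `S` (rank `r`, `k' + 1 = n - r` logical qubits) with `±p ∉ S`, where
`p̄ = x̄ 0` in a presentation `N(S)/S = ⟨ī, x̄ 0, z̄ 0, …⟩ ≅ P_{k'+1}`, yields
`S' = ⟨p⟩·S` whose remaining generators' cosets present `N(S')/S' ≅ P_{k'}`. -/
theorem normalizer_formalism_case_one (n r k' : ℕ) (hk : n - r = k' + 1)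
    (S : Subgroup (PMat (Fin n))ˣ) (hS : IsStabilizer (Fin n) S) (hr : HasRank S r)
    (p : (PMat (Fin n))ˣ) (hp : p ∈ PauliGroup (Fin n)) (hherm : IsHermitianPauli (Fin n) p)
    (hcomm : p ∈ Subgroup.centralizer (S : Set (PMat (Fin n))ˣ))
    (hpS : p ∉ S) (hnpS : -p ∉ S)
    (x z : Fin (k' + 1) → (PMat (Fin n))ˣ)
    (hx : ∀ j, x j ∈ NormIn (Fin n) S) (hz : ∀ j, z j ∈ NormIn (Fin n) S)
    (hx0 : (x 0)⁻¹ * p ∈ S)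
    (φ : LogicalGroup (Fin n) S ≃* ↥(PauliGroup (Fin (k' + 1))))
    (hφi : φ (QuotientGroup.mk ⟨iU (Fin n), iU_mem_normIn (Fin n) S⟩) =
      ⟨iU (Fin (k' + 1)), iU_mem (Fin (k' + 1))⟩)
    (hφx : ∀ j, φ (QuotientGroup.mk ⟨x j, hx j⟩) =
      ⟨XU (Fin (k' + 1)) j, XU_mem (Fin (k' + 1)) j⟩)
    (hφz : ∀ j, φ (QuotientGroup.mk ⟨z j, hz j⟩) =
      ⟨ZU (Fin (k' + 1)) j, ZU_mem (Fin (k' + 1)) j⟩)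
    (S' : Subgroup (PMat (Fin n))ˣ) (hS' : S' = Subgroup.closure {p} ⊔ S) :
    ∃ (hx' : ∀ i : Fin k', x i.succ ∈ NormIn (Fin n) S')
      (hz' : ∀ i : Fin k', z i.succ ∈ NormIn (Fin n) S'),
      Subgroup.closure
          (({QuotientGroup.mk ⟨iU (Fin n), iU_mem_normIn (Fin n) S'⟩} ∪
            Set.range (fun i : Fin k' => QuotientGroup.mk ⟨x i.succ, hx' i⟩) ∪
            Set.range (fun i : Fin k' => QuotientGroup.mk ⟨z i.succ, hz' i⟩) :
              Set (LogicalGroup (Fin n) S'))) = ⊤ ∧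
      ∃ ψ : LogicalGroup (Fin n) S' ≃* ↥(PauliGroup (Fin k')),
        ψ (QuotientGroup.mk ⟨iU (Fin n), iU_mem_normIn (Fin n) S'⟩) =
            ⟨iU (Fin k'), iU_mem (Fin k')⟩ ∧
        (∀ i : Fin k', ψ (QuotientGroup.mk ⟨x i.succ, hx' i⟩) = ⟨XU (Fin k') i, XU_mem (Fin k') i⟩) ∧
        (∀ i : Fin k', ψ (QuotientGroup.mk ⟨z i.succ, hz' i⟩) = ⟨ZU (Fin k') i, ZU_mem (Fin k') i⟩) := by
  classical
  -- p commutes with S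
  have hpc : ∀ s ∈ S, p * s = s * p := fun s hs =>
    (Subgroup.mem_centralizer_iff.mp hcomm s hs).symm
  -- p is an involution
  have hpinv : p⁻¹ = p := by
    apply Units.ext
    rw [← pauli_conjTranspose (Fin n) hp]
    exact hherm
  have hpsq : p * p = 1 := by nth_rewrite 2 [← hpinv]; exact mul_inv_cancel p
  have hppow : ∀ a : ℕ, p ^ a = 1 ∨ p ^ a = p := by
    intro a
    rw [pow_invol hpsq a]
    split_ifs
    · exact Or.inl rfl
    · exact Or.inr rfl
  -- p normalizes S
  have hpnorm : p ∈ NormIn (Fin n) S :=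
    Subgroup.mem_inf.mpr ⟨centralizes_mem_normalizer hpc, hp⟩
  -- members of S are Pauli
  have hSP : ∀ {s : (PMat (Fin n))ˣ}, s ∈ S → s ∈ PauliGroup (Fin n) := fun hs => hS.le hs
  -- structure of S'
  have hpow_comm : ∀ (a : ℕ) (s : (PMat (Fin n))ˣ), s ∈ S → p ^ a * s = s * p ^ a := by
    intro a s hs
    have hcomm' : Commute p s := hpc s hs
    exact (hcomm'.pow_left a).eq
  have hclosle : Subgroup.closure {p} ≤ S' := hS' ▸ le_sup_left
  have hSS' : S ≤ S' := hS' ▸ le_sup_right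
  have hS'mem : ∀ w : (PMat (Fin n))ˣ, w ∈ S' ↔ ∃ a s, s ∈ S ∧ w = p ^ a * s := by
    intro w
    constructor
    · intro hw
      rw [hS'] at hw
      let T : Subgroup (PMat (Fin n))ˣ :=
        { carrier := {w | ∃ a s, s ∈ S ∧ w = p ^ a * s}
          one_mem' := ⟨0, 1, one_mem S, by simp⟩
          mul_mem' := by
            rintro u v ⟨a, s, hs, rfl⟩ ⟨b, t, ht, rfl⟩
            refine ⟨a + b, s * t, mul_mem hs ht, ?_⟩
            rw [pow_add]
            calc p ^ a * s * (p ^ b * t) = p ^ a * (s * p ^ b) * t := by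
                  simp only [mul_assoc]
              _ = p ^ a * (p ^ b * s) * t := by rw [← hpow_comm b s hs]
              _ = p ^ a * p ^ b * (s * t) := by simp only [mul_assoc]
          inv_mem' := by
            rintro u ⟨a, s, hs, rfl⟩
            refine ⟨a, s⁻¹, inv_mem hs, ?_⟩
            rw [_root_.mul_inv_rev]
            have : (p ^ a)⁻¹ = p ^ a := by rw [← inv_pow, hpinv]
            rw [this, ← hpow_comm a s⁻¹ (inv_mem hs)] }
      have hle : Subgroup.closure {p} ⊔ S ≤ T := by
        apply sup_le
        · rw [Subgroup.closure_le]
          rintro u rfl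
          exact ⟨1, 1, one_mem S, by simp⟩
        · intro s hs
          exact ⟨0, s, hs, by simp⟩
      exact hle hw
    · rintro ⟨a, s, hs, rfl⟩
      exact mul_mem (pow_mem (hclosle (Subgroup.subset_closure rfl)) a) (hSS' hs)
  have hpS' : p ∈ S' := hclosle (Subgroup.subset_closure rfl)
  have hS'P : S' ≤ PauliGroup (Fin n) := by
    rw [hS']
    apply sup_le
    · rw [Subgroup.closure_le]
      rintro u rfl
      exact hp
    · exact hS.le
  -- -1 ∉ S'
  have hneg_one_S' : (-1 : (PMat (Fin n))ˣ) ∉ S' := by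
    intro hmem
    obtain ⟨a, s, hs, heq⟩ := (hS'mem _).mp hmem
    rcases hppow a with h1 | h1
    · rw [h1, one_mul] at heq
      exact hS.neg_one_notMem (heq ▸ hs)
    · rw [h1] at heq
      have : s = -p := by
        have h2 : p⁻¹ * (-1) = p⁻¹ * (p * s) := by rw [heq]
        rw [← mul_assoc, inv_mul_cancel, one_mul] at h2
        rw [← h2, hpinv, mul_neg, mul_one]
      exact hnpS (this ▸ hs)
  -- N(S') ≤ N(S) with p-commutation
  have hNS'_sub : ∀ g : (PMat (Fin n))ˣ, g ∈ NormIn (Fin n) S' →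
      g ∈ NormIn (Fin n) S ∧ g * p = p * g := by
    intro g hg
    obtain ⟨hgn, hgP⟩ := Subgroup.mem_inf.mp hg
    have hconj : ∀ u ∈ S', g * u * g⁻¹ ∈ S' := fun u hu =>
      (Subgroup.mem_normalizer_iff.mp hgn u).mp hu
    have hcent : ∀ u, u ∈ S' → u ∈ PauliGroup (Fin n) → g * u = u * g := by
      intro u hu huP
      rcases pauli_conj_pm (Fin n) hgP huP with h1 | h1
      · calc g * u = g * u * g⁻¹ * g := by rw [mul_assoc (g * u), inv_mul_cancel, mul_one]
          _ = u * g := by rw [h1]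
      · exfalso
        have hneg : -u ∈ S' := h1 ▸ hconj u hu
        have : (-1 : (PMat (Fin n))ˣ) ∈ S' := by
          have hm : (-u) * u⁻¹ ∈ S' := mul_mem hneg (inv_mem hu)
          rwa [neg_mul, mul_inv_cancel] at hm
        exact hneg_one_S' this
    have hcentS : ∀ s ∈ S, g * s = s * g := fun s hs =>
      hcent s (hSS' hs) (hSP hs)
    exact ⟨Subgroup.mem_inf.mpr ⟨centralizes_mem_normalizer hcentS, hgP⟩,
      hcent p hpS' hp⟩
  -- converse: N(S) ∩ C(p) ≤ N(S')
  have hNS'_super : ∀ g : (PMat (Fin n))ˣ, g ∈ NormIn (Fin n) S → g * p = p * g →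
      g ∈ NormIn (Fin n) S' := by
    intro g hg hgp
    obtain ⟨hgn, hgP⟩ := Subgroup.mem_inf.mp hg
    have key : ∀ h : (PMat (Fin n))ˣ, ∀ u ∈ Subgroup.normalizer (S : Set (PMat (Fin n))ˣ), u * p = p * u → h ∈ S' →
        u * h * u⁻¹ ∈ S' := by
      intro h u hun hup hh
      obtain ⟨a, s, hs, rfl⟩ := (hS'mem h).mp hh
      have hcu : Commute u p := hup
      have h1 : u * p ^ a = p ^ a * u := (hcu.pow_right a).eq
      have h2 : u * (p ^ a * s) * u⁻¹ = p ^ a * (u * s * u⁻¹) := by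
        calc u * (p ^ a * s) * u⁻¹ = (u * p ^ a) * s * u⁻¹ := by
              rw [← mul_assoc u (p ^ a) s]
          _ = (p ^ a * u) * s * u⁻¹ := by rw [h1]
          _ = p ^ a * (u * s * u⁻¹) := by rw [mul_assoc (p ^ a), mul_assoc (p ^ a), mul_assoc u]
      rw [h2]
      exact (hS'mem _).mpr ⟨a, u * s * u⁻¹,
        (Subgroup.mem_normalizer_iff.mp hun s).mp hs, rfl⟩
    refine Subgroup.mem_inf.mpr ⟨?_, hgP⟩
    rw [Subgroup.mem_normalizer_iff]
    intro h
    constructor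
    · intro hh
      exact key h g hgn hgp hh
    · intro hh
      have hginv_n : g⁻¹ ∈ Subgroup.normalizer (S : Set (PMat (Fin n))ˣ) := by
        have := Subgroup.mem_inf.mp hg
        exact inv_mem this.1
      have hginv_p : g⁻¹ * p = p * g⁻¹ := comm_inv hgp
      have h3 := key (g * h * g⁻¹) g⁻¹ hginv_n hginv_p hh
      have h4 : g⁻¹ * (g * h * g⁻¹) * g⁻¹⁻¹ = h := by group
      rwa [h4] at h3
  -- p-bar equals x-bar-0
  have hpx0 : (QuotientGroup.mk ⟨x 0, hx 0⟩ : LogicalGroup (Fin n) S) =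
      QuotientGroup.mk ⟨p, hpnorm⟩ := by
    rw [QuotientGroup.eq, Subgroup.mem_subgroupOf]
    exact hx0
  have hφp : φ (QuotientGroup.mk ⟨p, hpnorm⟩) =
      ⟨XU (Fin (k' + 1)) 0, XU_mem (Fin (k' + 1)) 0⟩ := by
    rw [← hpx0]
    exact hφx 0
  -- commutation criterion via φ
  have hcommp : ∀ (g : (PMat (Fin n))ˣ) (hgN : g ∈ NormIn (Fin n) S),
      ((φ (QuotientGroup.mk ⟨g, hgN⟩) : ↥(PauliGroup (Fin (k' + 1)))) : (PMat (Fin (k' + 1)))ˣ) *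
          XU (Fin (k' + 1)) 0 =
        XU (Fin (k' + 1)) 0 *
          ((φ (QuotientGroup.mk ⟨g, hgN⟩) : ↥(PauliGroup (Fin (k' + 1)))) : (PMat (Fin (k' + 1)))ˣ)
        → g * p = p * g := by
    intro g hgN hcm
    have hgP : g ∈ PauliGroup (Fin n) := (Subgroup.mem_inf.mp hgN).2
    have hsub : φ (QuotientGroup.mk ⟨g, hgN⟩) * ⟨XU (Fin (k' + 1)) 0, XU_mem (Fin (k' + 1)) 0⟩
        = (⟨XU (Fin (k' + 1)) 0, XU_mem (Fin (k' + 1)) 0⟩ : ↥(PauliGroup (Fin (k' + 1)))) *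
          φ (QuotientGroup.mk ⟨g, hgN⟩) := Subtype.ext hcm
    rw [← hφp, ← _root_.map_mul, ← _root_.map_mul] at hsub
    have hq := φ.injective hsub
    rw [← QuotientGroup.mk_mul, ← QuotientGroup.mk_mul] at hq
    have hsS : ((⟨g, hgN⟩ * ⟨p, hpnorm⟩ : ↥(NormIn (Fin n) S))⁻¹ *
        (⟨p, hpnorm⟩ * ⟨g, hgN⟩)) ∈ S.subgroupOf (NormIn (Fin n) S) := QuotientGroup.eq.mp hq
    have hsS' : (g * p)⁻¹ * (p * g) ∈ S := Subgroup.mem_subgroupOf.mp hsS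
    obtain ⟨ε, hε, he⟩ := pauli_pcomm (Fin n) hgP hp
    rcases hε with rfl | rfl
    · rw [one_mul] at he
      exact he
    · exfalso
      rw [neg_one_mul] at he
      have hpg : p * g = -(g * p) := by rw [he, neg_neg]
      have hval : (g * p)⁻¹ * (p * g) = -1 := by rw [hpg, mul_neg, inv_mul_cancel]
      exact hS.neg_one_notMem (hval ▸ hsS')
  -- memberships of x i.succ, z i.succ
  have hx' : ∀ i : Fin k', x i.succ ∈ NormIn (Fin n) S' := by
    intro i
    refine hNS'_super _ (hx i.succ) (hcommp _ (hx i.succ) ?_)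
    rw [hφx i.succ]
    exact Units.ext (XMat_comm (Fin (k' + 1)) i.succ 0)
  have hz' : ∀ i : Fin k', z i.succ ∈ NormIn (Fin n) S' := by
    intro i
    refine hNS'_super _ (hz i.succ) (hcommp _ (hz i.succ) ?_)
    rw [hφz i.succ]
    exact Units.ext ((XMat_ZMat_of_ne (Fin (k' + 1)) 0 i.succ (Fin.succ_ne_zero i)).symm)
  -- the lift map
  let cmap : ↥(PauliGroup (Fin k')) → LogicalGroup (Fin n) S :=
    fun q => φ.symm ⟨EU k' q.1, EU_mem k' q.2⟩
  have cmap_def : ∀ q : ↥(PauliGroup (Fin k')),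
      cmap q = φ.symm ⟨EU k' q.1, EU_mem k' q.2⟩ := fun _ => rfl
  have cmap_mul : ∀ q q', cmap (q * q') = cmap q * cmap q' := by
    intro q q'
    rw [cmap_def, cmap_def, cmap_def, ← _root_.map_mul]
    congr 1
    apply Subtype.ext
    exact _root_.map_mul (EU k') q.1 q'.1
  let wrep : ↥(PauliGroup (Fin k')) → ↥(NormIn (Fin n) S) := fun q => (cmap q).out
  have hwmk : ∀ q, (QuotientGroup.mk (wrep q) : LogicalGroup (Fin n) S) = cmap q :=
    fun q => QuotientGroup.out_eq' _
  have hφw : ∀ q, φ (QuotientGroup.mk (wrep q)) = ⟨EU k' q.1, EU_mem k' q.2⟩ := by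
    intro q
    rw [hwmk, cmap_def, φ.apply_symm_apply]
  have hwN' : ∀ q, ((wrep q : ↥(NormIn (Fin n) S)) : (PMat (Fin n))ˣ) ∈ NormIn (Fin n) S' := by
    intro q
    refine hNS'_super _ (wrep q).2 (hcommp _ (wrep q).2 ?_)
    rw [show (⟨((wrep q : ↥(NormIn (Fin n) S)) : (PMat (Fin n))ˣ), (wrep q).2⟩ :
      ↥(NormIn (Fin n) S)) = wrep q from rfl, hφw q]
    exact EU_comm_XU0 k' q.1
  -- helpers to compare cosets
  have mkS'_eq : ∀ (u v : (PMat (Fin n))ˣ) (hu : u ∈ NormIn (Fin n) S')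
      (hv : v ∈ NormIn (Fin n) S'), u⁻¹ * v ∈ S' →
      (QuotientGroup.mk ⟨u, hu⟩ : LogicalGroup (Fin n) S') = QuotientGroup.mk ⟨v, hv⟩ := by
    intro u v hu hv h
    rw [QuotientGroup.eq, Subgroup.mem_subgroupOf]
    exact h
  have mkS_mem : ∀ (a b : ↥(NormIn (Fin n) S)),
      (QuotientGroup.mk a : LogicalGroup (Fin n) S) = QuotientGroup.mk b →
      ((a : (PMat (Fin n))ˣ))⁻¹ * (b : (PMat (Fin n))ˣ) ∈ S := by
    intro a b h
    exact Subgroup.mem_subgroupOf.mp (QuotientGroup.eq.mp h)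
  -- the homomorphism Θ
  let Θf : ↥(PauliGroup (Fin k')) → LogicalGroup (Fin n) S' :=
    fun q => QuotientGroup.mk ⟨(wrep q : ↥(NormIn (Fin n) S)), hwN' q⟩
  have Θf_def : ∀ q, Θf q =
      QuotientGroup.mk ⟨(wrep q : ↥(NormIn (Fin n) S)), hwN' q⟩ := fun _ => rfl
  have Θmul : ∀ q q', Θf (q * q') = Θf q * Θf q' := by
    intro q q'
    have h1 : (QuotientGroup.mk (wrep q * wrep q') : LogicalGroup (Fin n) S) =
        QuotientGroup.mk (wrep (q * q')) := by
      rw [QuotientGroup.mk_mul, hwmk, hwmk, hwmk, ← cmap_mul]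
    have h2 := mkS_mem _ _ h1
    rw [Θf_def, Θf_def, Θf_def, ← QuotientGroup.mk_mul]
    exact (mkS'_eq _ _ _ _ (hSS' h2)).symm
  set Θ : ↥(PauliGroup (Fin k')) →* LogicalGroup (Fin n) S' := MonoidHom.mk' Θf Θmul with hΘ
  have Θ_apply : ∀ q, Θ q = Θf q := fun _ => rfl
  -- injectivity
  have Θinj : Function.Injective Θ := by
    rw [injective_iff_map_eq_one]
    intro q hq1
    rw [Θ_apply, Θf_def, QuotientGroup.eq_one_iff] at hq1
    have hmem : ((wrep q : ↥(NormIn (Fin n) S)) : (PMat (Fin n))ˣ) ∈ S' :=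
      Subgroup.mem_subgroupOf.mp hq1
    obtain ⟨a, s, hs, heq⟩ := (hS'mem _).mp hmem
    have h4 : (QuotientGroup.mk (wrep q) : LogicalGroup (Fin n) S) =
        (QuotientGroup.mk ⟨p, hpnorm⟩) ^ a := by
      rw [← quot_mk_pow, QuotientGroup.eq, Subgroup.mem_subgroupOf]
      show ((wrep q : ↥(NormIn (Fin n) S)) : (PMat (Fin n))ˣ)⁻¹ *
        ((⟨p, hpnorm⟩ ^ a : ↥(NormIn (Fin n) S)) : (PMat (Fin n))ˣ) ∈ S
      rw [subtype_pow_val, heq, _root_.mul_inv_rev, mul_assoc, inv_mul_cancel, mul_one]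
      exact inv_mem hs
    have h5 : (⟨EU k' q.1, EU_mem k' q.2⟩ : ↥(PauliGroup (Fin (k' + 1)))) =
        (⟨XU (Fin (k' + 1)) 0, XU_mem (Fin (k' + 1)) 0⟩ : ↥(PauliGroup (Fin (k' + 1)))) ^ a := by
      rw [← hφw q, h4, map_pow, hφp]
    have h6 : EU k' q.1 = (XU (Fin (k' + 1)) 0) ^ a := by
      have h5' := congrArg Subtype.val h5
      rwa [subtype_pow_val] at h5'
    rcases Nat.even_or_odd a with ha | ha
    · have hXa : (XU (Fin (k' + 1)) 0) ^ a = 1 := by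
        rw [pow_invol (XU_sq (Fin (k' + 1)) 0), if_pos (by rcases ha with ⟨c, hc⟩; omega)]
      rw [hXa] at h6
      have hq1' : q.1 = 1 := EU_injective k' (by rw [h6, _root_.map_one])
      exact Subtype.ext hq1'
    · exfalso
      have hXa : (XU (Fin (k' + 1)) 0) ^ a = XU (Fin (k' + 1)) 0 := by
        rw [pow_invol (XU_sq (Fin (k' + 1)) 0), if_neg (by rcases ha with ⟨c, hc⟩; omega)]
      rw [hXa] at h6
      have hc1 := EU_comm_ZU0 k' q.1
      rw [h6] at hc1
      have hc2 := XU_ZU_anticomm (Fin (k' + 1)) 0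
      rw [hc1] at hc2
      exact pmatUnits_ne_neg_self _ _ hc2
  -- surjectivity
  have Θsurj : Function.Surjective Θ := by
    intro cls
    have hcls : (QuotientGroup.mk cls.out : LogicalGroup (Fin n) S') = cls :=
      QuotientGroup.out_eq' cls
    obtain ⟨hgN, hgp⟩ := hNS'_sub cls.out.1 cls.out.2
    have hgP : cls.out.1 ∈ PauliGroup (Fin n) := (Subgroup.mem_inf.mp hgN).2
    have hcom : φ (QuotientGroup.mk ⟨cls.out.1, hgN⟩) *
        (⟨XU (Fin (k' + 1)) 0, XU_mem (Fin (k' + 1)) 0⟩ : ↥(PauliGroup (Fin (k' + 1)))) =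
        (⟨XU (Fin (k' + 1)) 0, XU_mem (Fin (k' + 1)) 0⟩ : ↥(PauliGroup (Fin (k' + 1)))) *
          φ (QuotientGroup.mk ⟨cls.out.1, hgN⟩) := by
      rw [← hφp, ← _root_.map_mul, ← _root_.map_mul, ← QuotientGroup.mk_mul,
        ← QuotientGroup.mk_mul]
      congr 2
      exact Subtype.ext hgp
    obtain ⟨q, a, hq, hEq⟩ := pauli_structure_centralizing k'
      (φ (QuotientGroup.mk ⟨cls.out.1, hgN⟩)).2 (congrArg Subtype.val hcom)
    refine ⟨⟨q, hq⟩, ?_⟩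
    have h7 : φ (QuotientGroup.mk ⟨cls.out.1, hgN⟩) =
        (⟨EU k' q, EU_mem k' hq⟩ : ↥(PauliGroup (Fin (k' + 1)))) *
          (⟨XU (Fin (k' + 1)) 0, XU_mem (Fin (k' + 1)) 0⟩ : ↥(PauliGroup (Fin (k' + 1)))) ^ a := by
      apply Subtype.ext
      rw [hEq]
      show EU k' q * XU (Fin (k' + 1)) 0 ^ a = _
      rw [show (((⟨EU k' q, EU_mem k' hq⟩ : ↥(PauliGroup (Fin (k' + 1)))) *
        (⟨XU (Fin (k' + 1)) 0, XU_mem (Fin (k' + 1)) 0⟩ : ↥(PauliGroup (Fin (k' + 1)))) ^ a :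
          ↥(PauliGroup (Fin (k' + 1)))) : (PMat (Fin (k' + 1)))ˣ) = EU k' q *
            ((((⟨XU (Fin (k' + 1)) 0, XU_mem (Fin (k' + 1)) 0⟩ : ↥(PauliGroup (Fin (k' + 1)))) ^ a :
              ↥(PauliGroup (Fin (k' + 1)))) : (PMat (Fin (k' + 1)))ˣ)) from rfl, subtype_pow_val]
    have h8 : (QuotientGroup.mk ⟨cls.out.1, hgN⟩ : LogicalGroup (Fin n) S) =
        cmap ⟨q, hq⟩ * (QuotientGroup.mk ⟨p, hpnorm⟩) ^ a := by
      apply φ.injective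
      rw [h7, _root_.map_mul, map_pow, hφp, cmap_def, φ.apply_symm_apply]
    have h9 : (QuotientGroup.mk (wrep ⟨q, hq⟩ * ⟨p, hpnorm⟩ ^ a) : LogicalGroup (Fin n) S) =
        QuotientGroup.mk ⟨cls.out.1, hgN⟩ := by
      rw [QuotientGroup.mk_mul, hwmk, quot_mk_pow, ← h8]
    have h10 := mkS_mem _ _ h9
    have h10' : (((wrep ⟨q, hq⟩ : ↥(NormIn (Fin n) S)) : (PMat (Fin n))ˣ) * p ^ a)⁻¹ *
        cls.out.1 ∈ S := by
      have hval : ((wrep ⟨q, hq⟩ * ⟨p, hpnorm⟩ ^ a : ↥(NormIn (Fin n) S)) : (PMat (Fin n))ˣ)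
          = ((wrep ⟨q, hq⟩ : ↥(NormIn (Fin n) S)) : (PMat (Fin n))ˣ) * p ^ a := by
        rw [show ((wrep ⟨q, hq⟩ * ⟨p, hpnorm⟩ ^ a : ↥(NormIn (Fin n) S)) : (PMat (Fin n))ˣ) =
          ((wrep ⟨q, hq⟩ : ↥(NormIn (Fin n) S)) : (PMat (Fin n))ˣ) *
            ((⟨p, hpnorm⟩ ^ a : ↥(NormIn (Fin n) S)) : (PMat (Fin n))ˣ) from rfl, subtype_pow_val]
      rw [← hval]
      exact h10
    rw [Θ_apply, Θf_def, ← hcls]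
    refine mkS'_eq _ _ _ _ ?_
    show (((wrep ⟨q, hq⟩ : ↥(NormIn (Fin n) S)) : (PMat (Fin n))ˣ))⁻¹ * cls.out.1 ∈ S'
    have hcompute : (((wrep ⟨q, hq⟩ : ↥(NormIn (Fin n) S)) : (PMat (Fin n))ˣ))⁻¹ * cls.out.1 =
        p ^ a * ((((wrep ⟨q, hq⟩ : ↥(NormIn (Fin n) S)) : (PMat (Fin n))ˣ) * p ^ a)⁻¹ *
          cls.out.1) := by group
    rw [hcompute]
    exact mul_mem (pow_mem hpS' a) (hSS' h10')
  -- the isomorphism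
  let ψe : ↥(PauliGroup (Fin k')) ≃* LogicalGroup (Fin n) S' :=
    MulEquiv.ofBijective Θ ⟨Θinj, Θsurj⟩
  have hψe_apply : ∀ q, ψe q = Θ q := fun _ => rfl
  let ψ : LogicalGroup (Fin n) S' ≃* ↥(PauliGroup (Fin k')) := ψe.symm
  -- computing values of Θ
  have hΘval : ∀ (q : ↥(PauliGroup (Fin k'))) (v : (PMat (Fin n))ˣ)
      (hvN : v ∈ NormIn (Fin n) S) (hvN' : v ∈ NormIn (Fin n) S'),
      cmap q = QuotientGroup.mk ⟨v, hvN⟩ → Θ q = QuotientGroup.mk ⟨v, hvN'⟩ := by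
    intro q v hvN hvN' hc
    have h1 : (QuotientGroup.mk (wrep q) : LogicalGroup (Fin n) S) =
        QuotientGroup.mk ⟨v, hvN⟩ := by rw [hwmk]; exact hc
    have h2 := mkS_mem _ _ h1
    rw [Θ_apply, Θf_def]
    exact mkS'_eq _ _ _ _ (hSS' h2)
  have hψval : ∀ (q : ↥(PauliGroup (Fin k'))) (v : (PMat (Fin n))ˣ)
      (hvN : v ∈ NormIn (Fin n) S) (hvN' : v ∈ NormIn (Fin n) S'),
      cmap q = QuotientGroup.mk ⟨v, hvN⟩ →
        ψ (QuotientGroup.mk ⟨v, hvN'⟩) = q := by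
    intro q v hvN hvN' hc
    rw [show ψ = ψe.symm from rfl, MulEquiv.symm_apply_eq, hψe_apply]
    exact (hΘval q v hvN hvN' hc).symm
  -- values on the generators
  have hψi : ψ (QuotientGroup.mk ⟨iU (Fin n), iU_mem_normIn (Fin n) S'⟩) =
      ⟨iU (Fin k'), iU_mem (Fin k')⟩ := by
    refine hψval _ _ (iU_mem_normIn (Fin n) S) _ ?_
    rw [cmap_def, MulEquiv.symm_apply_eq, hφi]
    apply Subtype.ext
    exact EU_iU k'
  have hψx : ∀ i : Fin k', ψ (QuotientGroup.mk ⟨x i.succ, hx' i⟩) =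
      ⟨XU (Fin k') i, XU_mem (Fin k') i⟩ := by
    intro i
    refine hψval _ _ (hx i.succ) _ ?_
    rw [cmap_def, MulEquiv.symm_apply_eq, hφx i.succ]
    apply Subtype.ext
    exact EU_XU k' i
  have hψz : ∀ i : Fin k', ψ (QuotientGroup.mk ⟨z i.succ, hz' i⟩) =
      ⟨ZU (Fin k') i, ZU_mem (Fin k') i⟩ := by
    intro i
    refine hψval _ _ (hz i.succ) _ ?_
    rw [cmap_def, MulEquiv.symm_apply_eq, hφz i.succ]
    apply Subtype.ext
    exact EU_ZU k' i
  -- generation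
  refine ⟨hx', hz', ?_, ψ, hψi, hψx, hψz⟩
  have htop' : Subgroup.closure
      ((Subtype.val ⁻¹' (PGens (Fin k'))) : Set ↥(PauliGroup (Fin k'))) = ⊤ :=
    Subgroup.closure_closure_coe_preimage
  have hseteq : ((Subtype.val ⁻¹' (PGens (Fin k'))) : Set ↥(PauliGroup (Fin k'))) =
      ({⟨iU (Fin k'), iU_mem (Fin k')⟩} ∪
        Set.range (fun j : Fin k' => (⟨XU (Fin k') j, XU_mem (Fin k') j⟩ :
          ↥(PauliGroup (Fin k')))) ∪
        Set.range (fun j : Fin k' => (⟨ZU (Fin k') j, ZU_mem (Fin k') j⟩ :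
          ↥(PauliGroup (Fin k'))))) := by
    ext u
    simp only [Set.mem_preimage, PGens, Set.mem_union, Set.mem_singleton_iff, Set.mem_range,
      Subtype.ext_iff]
  have htop2 : Subgroup.closure
      ({⟨iU (Fin k'), iU_mem (Fin k')⟩} ∪
        Set.range (fun j : Fin k' => (⟨XU (Fin k') j, XU_mem (Fin k') j⟩ :
          ↥(PauliGroup (Fin k')))) ∪
        Set.range (fun j : Fin k' => (⟨ZU (Fin k') j, ZU_mem (Fin k') j⟩ :
          ↥(PauliGroup (Fin k'))))) = ⊤ := by
    rw [← hseteq]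
    exact htop'
  apply Subgroup.map_injective (f := ψ.toMonoidHom) ψ.injective
  rw [Subgroup.map_top_of_surjective _ ψ.surjective, MonoidHom.map_closure]
  rw [Set.image_union, Set.image_union, Set.image_singleton, ← Set.range_comp, ← Set.range_comp]
  rw [show ψ.toMonoidHom (QuotientGroup.mk ⟨iU (Fin n), iU_mem_normIn (Fin n) S'⟩) =
    (⟨iU (Fin k'), iU_mem (Fin k')⟩ : ↥(PauliGroup (Fin k'))) from hψi]
  rw [show (⇑ψ.toMonoidHom ∘ fun i : Fin k' =>
      (QuotientGroup.mk ⟨x i.succ, hx' i⟩ : LogicalGroup (Fin n) S')) =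
    fun i : Fin k' => (⟨XU (Fin k') i, XU_mem (Fin k') i⟩ : ↥(PauliGroup (Fin k'))) from
      funext fun i => hψx i]
  rw [show (⇑ψ.toMonoidHom ∘ fun i : Fin k' =>
      (QuotientGroup.mk ⟨z i.succ, hz' i⟩ : LogicalGroup (Fin n) S')) =
    fun i : Fin k' => (⟨ZU (Fin k') i, ZU_mem (Fin k') i⟩ : ↥(PauliGroup (Fin k'))) from
      funext fun i => hψz i]
  exact htop2
end
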